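/- arXiv:1710.06079 — 6 statements merged into one kernel-verified Lean document; each statement's English description precedes it below -/
import Mathlib

section
/- Under the observability inequality, J is coercive; more precisely, J(η) ≥ ε‖η‖ − (1/2)·C²·‖v‖² for every η ∈ H, so J(η) → ∞ as ‖η‖ → ∞. -/
/-!
Young's inequality `C ‖v‖ ‖S η‖ ≤ ½ C² ‖v‖² + ½ ‖S η‖²` combined with the observability inequality
shows that the quadratic term `½ ‖S η‖²` absorbs the linear term `⟨v, R η⟩` up to the constant
`½ C² ‖v‖²`, leaving the lower bound `ε ‖η‖ − ½ C² ‖v‖²`, which tends to infinity with `‖η‖`.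
-/

open scoped RealInnerProductSpace

open Filter

lemma neg_half_sq_sub_half_sq_le_real_inner {E : Type*} [NormedAddCommGroup E]
    [InnerProductSpace ℝ E] {v w : E} {C t : ℝ} (hw : ‖w‖ ≤ C * t) :
    -(1 / 2) * C ^ 2 * ‖v‖ ^ 2 - (1 / 2) * t ^ 2 ≤ ⟪v, w⟫ := by
  have hCS : -(‖v‖ * ‖w‖) ≤ ⟪v, w⟫ := neg_le_of_abs_le (abs_real_inner_le_norm v w)
  have hobs : ‖v‖ * ‖w‖ ≤ ‖v‖ * (C * t) := mul_le_mul_of_nonneg_left hw (norm_nonneg v)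
  have hYoung : ‖v‖ * (C * t) ≤ (1 / 2) * C ^ 2 * ‖v‖ ^ 2 + (1 / 2) * t ^ 2 := by
    nlinarith [sq_nonneg (C * ‖v‖ - t)]
  linarith

lemma tendsto_atTop_of_mul_norm_sub_le {E : Type*} [Norm E] {f : E → ℝ} {ε c : ℝ} (hε : 0 < ε)
    (hf : ∀ x, ε * ‖x‖ - c ≤ f x) : Tendsto f (comap norm atTop) atTop :=
  tendsto_atTop_mono hf <|
    tendsto_atTop_add_const_right _ _ ((tendsto_comap (f := norm)).const_mul_atTop hε)

theorem stmt2_general {H K K₀ : Type*}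
    [NormedAddCommGroup H] [InnerProductSpace ℝ H]
    [NormedAddCommGroup K] [InnerProductSpace ℝ K]
    [NormedAddCommGroup K₀] [InnerProductSpace ℝ K₀]
    (S : H →L[ℝ] K) (R : H →L[ℝ] K₀) (v : K₀) (ε : ℝ) (hε : 0 < ε)
    (C : ℝ) (hobs : ∀ η : H, ‖R η‖ ≤ C * ‖S η‖)
    (J : H → ℝ)
    (hJ : ∀ η : H, J η = (1 / 2) * ‖S η‖ ^ 2 + ε * ‖η‖ + ⟪v, R η⟫) :
    (∀ η : H, ε * ‖η‖ - (1 / 2) * C ^ 2 * ‖v‖ ^ 2 ≤ J η) ∧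
      Filter.Tendsto J (Filter.comap norm Filter.atTop) Filter.atTop := by
  have hbound : ∀ η : H, ε * ‖η‖ - (1 / 2) * C ^ 2 * ‖v‖ ^ 2 ≤ J η := fun η => by
    have := neg_half_sq_sub_half_sq_le_real_inner (v := v) (hobs η)
    rw [hJ η]
    linarith
  exact ⟨hbound, tendsto_atTop_of_mul_norm_sub_le hε hbound⟩

/-- Under the observability inequality `‖R η‖ ≤ C ‖S η‖`, the functional
`J(η) = (1/2)‖S η‖² + ε‖η‖ + ⟨v, R η⟩` is coercive:
`J η ≥ ε‖η‖ − (1/2) C² ‖v‖²` for all `η`, and `J η → ∞` as `‖η‖ → ∞`. -/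
theorem stmt2 {H K K₀ : Type*}
    [NormedAddCommGroup H] [InnerProductSpace ℝ H] [CompleteSpace H]
    [NormedAddCommGroup K] [InnerProductSpace ℝ K] [CompleteSpace K]
    [NormedAddCommGroup K₀] [InnerProductSpace ℝ K₀] [CompleteSpace K₀]
    (S : H →L[ℝ] K) (R : H →L[ℝ] K₀) (v : K₀) (ε : ℝ) (hε : 0 < ε)
    (C : ℝ) (hC : 0 < C) (hobs : ∀ η : H, ‖R η‖ ≤ C * ‖S η‖)
    (J : H → ℝ)
    (hJ : ∀ η : H, J η = (1 / 2) * ‖S η‖ ^ 2 + ε * ‖η‖ + ⟪v, R η⟫) :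
    (∀ η : H, ε * ‖η‖ - (1 / 2) * C ^ 2 * ‖v‖ ^ 2 ≤ J η) ∧
      Filter.Tendsto J (Filter.comap norm Filter.atTop) Filter.atTop :=
  stmt2_general S R v ε hε C hobs J hJ
end

section
/- Under the observability inequality, the functional J attains its infimum: there exists η* ∈ H such that J(η*) = inf_{η ∈ H} J(η). -/
/-!
`J` is convex and continuous, hence weakly lower semicontinuous (its sublevel sets are closed and
convex, so weakly closed). The observability inequality gives
`J η ≥ ε ‖η‖ - (C ‖v‖)² / 2`, so the sublevel set `{J ≤ J 0}` is bounded. Hilbert spaces are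
reflexive, so by Banach–Alaoglu that set is weakly compact, and `J` attains its minimum on it.
-/

open scoped RealInnerProductSpace

open Metric NormedSpace Filter Bornology Set

theorem InnerProductSpace.surjective_inclusionInDoubleDual {H : Type*} [NormedAddCommGroup H]
    [InnerProductSpace ℝ H] [CompleteSpace H] :
    Function.Surjective (inclusionInDoubleDual ℝ H) := by
  intro Φ
  refine ⟨(toDual ℝ H).symm (Φ.comp (toDual ℝ H).toContinuousLinearEquiv.toContinuousLinearMap), ?_⟩
  ext ℓ
  obtain ⟨y, rfl⟩ := (toDual ℝ H).surjective ℓ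
  rw [dual_def, InnerProductSpace.toDual_apply_apply, real_inner_comm,
    InnerProductSpace.toDual_symm_apply]
  rfl

theorem ConvexOn.lowerSemicontinuous_comp_toWeakSpace_symm {E : Type*} [AddCommGroup E] [Module ℝ E]
    [TopologicalSpace E] [IsTopologicalAddGroup E] [ContinuousSMul ℝ E] [LocallyConvexSpace ℝ E]
    {f : E → ℝ} (hconv : ConvexOn ℝ univ f) (hf : LowerSemicontinuous f) :
    LowerSemicontinuous (f ∘ (toWeakSpace ℝ E).symm) := by
  refine lowerSemicontinuous_iff_isClosed_preimage.2 fun c ↦ ?_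
  have hsub : f ∘ (toWeakSpace ℝ E).symm ⁻¹' Iic c = toWeakSpace ℝ E '' (f ⁻¹' Iic c) := by
    rw [preimage_comp, LinearEquiv.image_eq_preimage_symm]
  have hconvc : Convex ℝ (f ⁻¹' Iic c) := by
    convert hconv.convex_le c using 1
    ext
    simp
  rw [hsub, ← (hf.isClosed_preimage c).closure_eq, hconvc.toWeakSpace_closure ℝ]
  exact isClosed_closure

section Hilbert

variable {H : Type*} [NormedAddCommGroup H] [InnerProductSpace ℝ H] [CompleteSpace H]

theorem InnerProductSpace.isCompact_toWeakSpace_closedBall (x : H) (r : ℝ) :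
    IsCompact (toWeakSpace ℝ H '' closedBall x r) := by
  have hclosure :
      closure (toWeakSpace ℝ H '' closedBall x r) = toWeakSpace ℝ H '' closedBall x r := by
    rw [← (convex_closedBall x r).toWeakSpace_closure ℝ, isClosed_closedBall.closure_eq]
  rw [← hclosure]
  refine isCompact_closure_of_isBounded ℝ H _ ?_ ?_
  · rw [(toWeakSpace ℝ H).injective.preimage_image]
    exact isBounded_closedBall
  · rintro Φ -
    obtain ⟨y, hy⟩ := InnerProductSpace.surjective_inclusionInDoubleDual (WeakDual.toStrongDual Φ)
    exact ⟨toWeakSpace ℝ H y, hy⟩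

theorem ConvexOn.exists_forall_le_of_tendsto_cobounded {f : H → ℝ} (hconv : ConvexOn ℝ univ f)
    (hf : LowerSemicontinuous f) (hcoer : Tendsto f (cobounded H) atTop) :
    ∃ x, ∀ y, f x ≤ f y := by
  set e := toWeakSpace ℝ H
  set s := f ⁻¹' Iic (f 0)
  have hbdd : IsBounded s := by
    rw [isBounded_def]
    filter_upwards [hcoer.eventually_gt_atTop (f 0)] with y hy
    simpa [s] using hy
  obtain ⟨r, hr⟩ := hbdd.subset_closedBall 0
  have h0 : (0 : H) ∈ s := le_refl (f 0)
  have hlsc := hconv.lowerSemicontinuous_comp_toWeakSpace_symm hf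
  have hcompact : IsCompact (e '' s) := by
    refine (InnerProductSpace.isCompact_toWeakSpace_closedBall 0 r).of_isClosed_subset ?_
      (image_mono hr)
    rw [LinearEquiv.image_eq_preimage_symm]
    exact hlsc.isClosed_preimage (f 0)
  obtain ⟨_, ⟨x, hxs, rfl⟩, hmin⟩ := LowerSemicontinuousOn.exists_isMinOn
    ⟨e 0, mem_image_of_mem e h0⟩ hcompact (hlsc.lowerSemicontinuousOn _)
  have hle : ∀ y ∈ s, f x ≤ f y := fun y hy ↦ by
    simpa [e] using hmin (mem_image_of_mem e hy)
  refine ⟨x, fun y ↦ ?_⟩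
  by_cases hy : y ∈ s
  · exact hle y hy
  · exact (hle 0 h0).trans (not_le.1 hy).le

end Hilbert

section CostFunctional

variable {H K K₀ : Type*} [NormedAddCommGroup H] [NormedSpace ℝ H]
  [NormedAddCommGroup K] [NormedSpace ℝ K] [NormedAddCommGroup K₀] [InnerProductSpace ℝ K₀]
  (S : H →L[ℝ] K) (R : H →L[ℝ] K₀) (v : K₀) (ε : ℝ)

noncomputable def costFunctional (η : H) : ℝ := (1 / 2) * ‖S η‖ ^ 2 + ε * ‖η‖ + ⟪v, R η⟫

theorem convexOn_costFunctional (hε : 0 ≤ ε) : ConvexOn ℝ univ (costFunctional S R v ε) := by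
  have hsq : ConvexOn ℝ univ fun η ↦ ‖S η‖ ^ 2 :=
    (convexOn_univ_norm.pow (fun _ _ ↦ norm_nonneg _) 2).comp_linearMap S.toLinearMap
  have hlin : ConvexOn ℝ univ fun η ↦ ⟪v, R η⟫ :=
    ((innerSL ℝ v).comp R).toLinearMap.convexOn convex_univ
  exact ((hsq.smul (by norm_num)).add (convexOn_univ_norm.smul hε)).add hlin

theorem continuous_costFunctional : Continuous (costFunctional S R v ε) := by
  unfold costFunctional
  fun_prop

theorem costFunctional_ge {C : ℝ} (hobs : ∀ η, ‖R η‖ ≤ C * ‖S η‖) (η : H) :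
    ε * ‖η‖ - (C * ‖v‖) ^ 2 / 2 ≤ costFunctional S R v ε η := by
  have hpair : -(‖v‖ * (C * ‖S η‖)) ≤ ⟪v, R η⟫ :=
    calc -(‖v‖ * (C * ‖S η‖)) ≤ -(‖v‖ * ‖R η‖) :=
          neg_le_neg (mul_le_mul_of_nonneg_left (hobs η) (norm_nonneg v))
      _ ≤ ⟪v, R η⟫ := neg_le_of_abs_le (abs_real_inner_le_norm v (R η))
  unfold costFunctional
  nlinarith [sq_nonneg (‖S η‖ - C * ‖v‖)]

theorem tendsto_costFunctional_cobounded (hε : 0 < ε) {C : ℝ}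
    (hobs : ∀ η, ‖R η‖ ≤ C * ‖S η‖) : Tendsto (costFunctional S R v ε) (cobounded H) atTop := by
  refine tendsto_atTop_mono (costFunctional_ge S R v ε hobs) ?_
  exact tendsto_atTop_add_const_right _ _ (tendsto_norm_cobounded_atTop.const_mul_atTop hε)

end CostFunctional

theorem stmt3_general {H K K₀ : Type*}
    [NormedAddCommGroup H] [InnerProductSpace ℝ H] [CompleteSpace H]
    [NormedAddCommGroup K] [InnerProductSpace ℝ K]
    [NormedAddCommGroup K₀] [InnerProductSpace ℝ K₀]
    (S : H →L[ℝ] K) (R : H →L[ℝ] K₀) (v : K₀) (ε : ℝ) (hε : 0 < ε)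
    (C : ℝ) (hobs : ∀ η : H, ‖R η‖ ≤ C * ‖S η‖)
    (J : H → ℝ)
    (hJ : ∀ η : H, J η = (1 / 2) * ‖S η‖ ^ 2 + ε * ‖η‖ + ⟪v, R η⟫) :
    ∃ ηs : H, (∀ η : H, J ηs ≤ J η) ∧ J ηs = sInf (Set.range J) := by
  obtain rfl : J = costFunctional S R v ε := funext hJ
  obtain ⟨ηs, hmin⟩ := (convexOn_costFunctional S R v ε hε.le).exists_forall_le_of_tendsto_cobounded
    (continuous_costFunctional S R v ε).lowerSemicontinuous
    (tendsto_costFunctional_cobounded S R v ε hε hobs)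
  exact ⟨ηs, hmin, (IsLeast.csInf_eq ⟨mem_range_self ηs, forall_mem_range.2 hmin⟩).symm⟩

/-- Under the observability inequality `‖R η‖ ≤ C ‖S η‖`, the functional
`J(η) = (1/2)‖S η‖² + ε‖η‖ + ⟨v, R η⟩` attains its infimum:
there exists `η⋆` with `J η⋆ = inf J`. -/
theorem stmt3 {H K K₀ : Type*}
    [NormedAddCommGroup H] [InnerProductSpace ℝ H] [CompleteSpace H]
    [NormedAddCommGroup K] [InnerProductSpace ℝ K] [CompleteSpace K]
    [NormedAddCommGroup K₀] [InnerProductSpace ℝ K₀] [CompleteSpace K₀]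
    (S : H →L[ℝ] K) (R : H →L[ℝ] K₀) (v : K₀) (ε : ℝ) (hε : 0 < ε)
    (C : ℝ) (hC : 0 < C) (hobs : ∀ η : H, ‖R η‖ ≤ C * ‖S η‖)
    (J : H → ℝ)
    (hJ : ∀ η : H, J η = (1 / 2) * ‖S η‖ ^ 2 + ε * ‖η‖ + ⟪v, R η⟫) :
    ∃ ηs : H, (∀ η : H, J ηs ≤ J η) ∧ J ηs = sInf (Set.range J) :=
  stmt3_general S R v ε hε C hobs J hJ
end

section
/- If η* ∈ H is a minimizer of J, then for every η ∈ H one has |⟨S η*, S η⟩ + ⟨v, R η⟩| ≤ ε‖η‖. -/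
/-!
Along the ray `ηs + t η`, `t ≥ 0`, the quadratic part of `J` expands exactly and the term
`ε‖·‖` grows at most linearly by the triangle inequality, so
`0 ≤ J (ηs + t η) - J ηs ≤ t (⟪S ηs, S η⟫ + ⟪v, R η⟫ + ε‖η‖) + O(t²)`.
Dividing by `t` and letting `t → 0⁺` gives one side of the bound; the direction `-η` gives the
other.
-/

open scoped RealInnerProductSpace
open Filter Topology

theorem nonneg_of_forall_pos_mul_add_mul_sq {a b : ℝ} (h : ∀ t > 0, 0 ≤ a * t + b * t ^ 2) :
    0 ≤ a := by
  have hlim : Tendsto (fun t : ℝ => a + b * t) (𝓝[>] 0) (𝓝 a) :=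
    tendsto_nhdsWithin_of_tendsto_nhds ((by fun_prop : Continuous _).tendsto' 0 a (by simp))
  refine ge_of_tendsto hlim (eventually_nhdsWithin_of_forall fun t (ht : 0 < t) => ?_)
  have := h t ht
  nlinarith

section

variable {H K K₀ : Type*}
    [NormedAddCommGroup H] [InnerProductSpace ℝ H]
    [NormedAddCommGroup K] [InnerProductSpace ℝ K]
    [NormedAddCommGroup K₀] [InnerProductSpace ℝ K₀]
    (S : H →L[ℝ] K) (R : H →L[ℝ] K₀) (v : K₀) {ε : ℝ}

theorem norm_sq_map_add_smul (x y : H) (t : ℝ) :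
    ‖S (x + t • y)‖ ^ 2 = ‖S x‖ ^ 2 + 2 * t * ⟪S x, S y⟫ + t ^ 2 * ‖S y‖ ^ 2 := by
  rw [map_add, map_smul, norm_add_sq_real, real_inner_smul_right, norm_smul, mul_pow,
    Real.norm_eq_abs, sq_abs]
  ring

theorem cost_add_smul_le (hε : 0 ≤ ε) (x y : H) {t : ℝ} (ht : 0 ≤ t) :
    (1 / 2) * ‖S (x + t • y)‖ ^ 2 + ε * ‖x + t • y‖ + ⟪v, R (x + t • y)⟫ ≤
      (1 / 2) * ‖S x‖ ^ 2 + ε * ‖x‖ + ⟪v, R x⟫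
        + (⟪S x, S y⟫ + ⟪v, R y⟫ + ε * ‖y‖) * t + (1 / 2) * ‖S y‖ ^ 2 * t ^ 2 := by
  have hnorm : ‖x + t • y‖ ≤ ‖x‖ + t * ‖y‖ := by
    simpa [norm_smul, abs_of_nonneg ht] using norm_add_le x (t • y)
  rw [norm_sq_map_add_smul, map_add, map_smul, inner_add_right, real_inner_smul_right]
  nlinarith [mul_le_mul_of_nonneg_left hnorm hε]

end

theorem stmt4_general {H K K₀ : Type*}
    [NormedAddCommGroup H] [InnerProductSpace ℝ H]
    [NormedAddCommGroup K] [InnerProductSpace ℝ K]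
    [NormedAddCommGroup K₀] [InnerProductSpace ℝ K₀]
    (S : H →L[ℝ] K) (R : H →L[ℝ] K₀) (v : K₀) (ε : ℝ) (hε : 0 < ε)
    (J : H → ℝ)
    (hJ : ∀ η : H, J η = (1 / 2) * ‖S η‖ ^ 2 + ε * ‖η‖ + ⟪v, R η⟫)
    (ηs : H) (hmin : ∀ η : H, J ηs ≤ J η) :
    ∀ η : H, |⟪S ηs, S η⟫ + ⟪v, R η⟫| ≤ ε * ‖η‖ := by
  have directional : ∀ η : H, 0 ≤ ⟪S ηs, S η⟫ + ⟪v, R η⟫ + ε * ‖η‖ := fun η =>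
    nonneg_of_forall_pos_mul_add_mul_sq (b := (1 / 2) * ‖S η‖ ^ 2) fun t ht => by
      have := hmin (ηs + t • η)
      rw [hJ, hJ] at this
      linarith [cost_add_smul_le S R v hε.le ηs η ht.le]
  intro η
  have hneg := directional (-η)
  rw [map_neg, map_neg, inner_neg_right, inner_neg_right, norm_neg] at hneg
  exact abs_le.2 ⟨by linarith [directional η], by linarith⟩

/-- If `ηs` minimizes `J(η) = (1/2)‖S η‖² + ε‖η‖ + ⟨v, R η⟩`, then for every `η`
one has `|⟨S ηs, S η⟩ + ⟨v, R η⟩| ≤ ε‖η‖`. -/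
theorem stmt4 {H K K₀ : Type*}
    [NormedAddCommGroup H] [InnerProductSpace ℝ H] [CompleteSpace H]
    [NormedAddCommGroup K] [InnerProductSpace ℝ K] [CompleteSpace K]
    [NormedAddCommGroup K₀] [InnerProductSpace ℝ K₀] [CompleteSpace K₀]
    (S : H →L[ℝ] K) (R : H →L[ℝ] K₀) (v : K₀) (ε : ℝ) (hε : 0 < ε)
    (J : H → ℝ)
    (hJ : ∀ η : H, J η = (1 / 2) * ‖S η‖ ^ 2 + ε * ‖η‖ + ⟪v, R η⟫)
    (ηs : H) (hmin : ∀ η : H, J ηs ≤ J η) :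
    ∀ η : H, |⟪S ηs, S η⟫ + ⟪v, R η⟫| ≤ ε * ‖η‖ :=
  stmt4_general S R v ε hε J hJ ηs hmin
end

section
/- If η* ∈ H is a minimizer of J and η* ≠ 0, then the Euler–Lagrange equation holds: for every η ∈ H, ⟨S η*, S η⟩ + ε·⟨η*, η⟩/‖η*‖ + ⟨v, R η⟩ = 0. -/
open scoped RealInnerProductSpace

section

variable {E F G : Type*} [NormedAddCommGroup E] [InnerProductSpace ℝ E]
  [NormedAddCommGroup F] [InnerProductSpace ℝ F] [NormedAddCommGroup G] [InnerProductSpace ℝ G]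

theorem hasStrictFDerivAt_norm {x : E} (hx : x ≠ 0) :
    HasStrictFDerivAt (‖·‖) (‖x‖⁻¹ • innerSL ℝ x) x := by
  have hsq : ‖x‖ ^ 2 ≠ 0 := by positivity
  convert (hasStrictFDerivAt_norm_sq x).sqrt hsq using 1
  · ext y
    exact (Real.sqrt_sq (norm_nonneg y)).symm
  · ext y
    simp only [smul_apply, coe_innerSL_apply, smul_eq_mul, Real.sqrt_sq (norm_nonneg x),
      nsmul_eq_mul, Nat.cast_ofNat]
    field_simp

theorem hasFDerivAt_half_norm_sq_add_norm_add_inner (S : E →L[ℝ] F) (R : E →L[ℝ] G) (v : G)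
    (ε : ℝ) {x : E} (hx : x ≠ 0) :
    HasFDerivAt (fun η => (1 / 2) * ‖S η‖ ^ 2 + ε * ‖η‖ + ⟪v, R η⟫)
      ((innerSL ℝ (S x)).comp S + (ε * ‖x‖⁻¹) • innerSL ℝ x + (innerSL ℝ v).comp R) x := by
  have hquad := (S.hasFDerivAt (x := x)).norm_sq.const_mul (1 / 2)
  have hnorm := (hasStrictFDerivAt_norm hx).hasFDerivAt.const_mul ε
  have hlin := ((innerSL ℝ v).comp R).hasFDerivAt (x := x)
  refine ((hquad.add hnorm).add hlin).congr_fderiv ?_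
  ext y
  simp only [add_apply, smul_apply, ContinuousLinearMap.comp_apply, coe_innerSL_apply,
    nsmul_eq_mul, Nat.cast_ofNat, smul_eq_mul]
  ring

end

theorem stmt5_general {H K K₀ : Type*}
    [NormedAddCommGroup H] [InnerProductSpace ℝ H]
    [NormedAddCommGroup K] [InnerProductSpace ℝ K]
    [NormedAddCommGroup K₀] [InnerProductSpace ℝ K₀]
    (S : H →L[ℝ] K) (R : H →L[ℝ] K₀) (v : K₀) (ε : ℝ)
    (J : H → ℝ)
    (hJ : ∀ η : H, J η = (1 / 2) * ‖S η‖ ^ 2 + ε * ‖η‖ + ⟪v, R η⟫)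
    (ηs : H) (hmin : ∀ η : H, J ηs ≤ J η) (hne : ηs ≠ 0) :
    ∀ η : H, ⟪S ηs, S η⟫ + ε * (⟪ηs, η⟫ / ‖ηs‖) + ⟪v, R η⟫ = 0 := by
  intro η
  have hderiv := hasFDerivAt_half_norm_sq_add_norm_add_inner S R v ε hne
  rw [← funext hJ] at hderiv
  have hlocal : IsLocalMin J ηs := Filter.Eventually.of_forall hmin
  have hcrit := DFunLike.congr_fun (hlocal.hasFDerivAt_eq_zero hderiv) η
  simpa [div_eq_inv_mul, mul_assoc] using hcrit

/-- If `ηs ≠ 0` minimizes `J(η) = (1/2)‖S η‖² + ε‖η‖ + ⟨v, R η⟩`, then the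
Euler–Lagrange equation holds:
`⟨S ηs, S η⟩ + ε ⟨ηs, η⟩/‖ηs‖ + ⟨v, R η⟩ = 0` for every `η`. -/
theorem stmt5 {H K K₀ : Type*}
    [NormedAddCommGroup H] [InnerProductSpace ℝ H] [CompleteSpace H]
    [NormedAddCommGroup K] [InnerProductSpace ℝ K] [CompleteSpace K]
    [NormedAddCommGroup K₀] [InnerProductSpace ℝ K₀] [CompleteSpace K₀]
    (S : H →L[ℝ] K) (R : H →L[ℝ] K₀) (v : K₀) (ε : ℝ) (hε : 0 < ε)
    (J : H → ℝ)
    (hJ : ∀ η : H, J η = (1 / 2) * ‖S η‖ ^ 2 + ε * ‖η‖ + ⟪v, R η⟫)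
    (ηs : H) (hmin : ∀ η : H, J ηs ≤ J η) (hne : ηs ≠ 0) :
    ∀ η : H, ⟪S ηs, S η⟫ + ε * (⟪ηs, η⟫ / ‖ηs‖) + ⟪v, R η⟫ = 0 :=
  stmt5_general S R v ε J hJ ηs hmin hne
end

section
/- Assume the observability inequality ‖R η‖² ≤ C‖S η‖² for all η ∈ H (with C > 0). If η* ∈ H is a minimizer of J, then ‖R η*‖ ≤ C‖v‖, ε‖η*‖ ≤ C‖v‖², and ‖S η*‖² ≤ C‖v‖². -/
open scoped RealInnerProductSpace

/-
Along the ray `t ↦ t • η*` the cost is the quadratic `t²/2 ‖S η*‖² + t (ε‖η*‖ + ⟪v, R η*⟫)`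
for `t ≥ 0`, which is minimal at the interior point `t = 1`; its vanishing derivative gives the
Euler identity `‖S η*‖² + ε‖η*‖ + ⟪v, R η*⟫ = 0`. With Cauchy–Schwarz this yields
`‖S η*‖² + ε‖η*‖ ≤ ‖v‖ ‖R η*‖`, and the observability inequality
`‖R η*‖² ≤ C ‖S η*‖² ≤ C ‖v‖ ‖R η*‖` gives `‖R η*‖ ≤ C‖v‖`; the other two bounds follow.
-/

section ControlCost

variable {H K K₀ : Type*}
  [NormedAddCommGroup H] [NormedSpace ℝ H]
  [NormedAddCommGroup K] [NormedSpace ℝ K]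
  [NormedAddCommGroup K₀] [InnerProductSpace ℝ K₀]

noncomputable def controlCost (S : H →L[ℝ] K) (R : H →L[ℝ] K₀) (v : K₀) (ε : ℝ) (η : H) : ℝ :=
  (1 / 2) * ‖S η‖ ^ 2 + ε * ‖η‖ + ⟪v, R η⟫

theorem controlCost_smul (S : H →L[ℝ] K) (R : H →L[ℝ] K₀) (v : K₀) (ε : ℝ) (η : H)
    {t : ℝ} (ht : 0 ≤ t) :
    controlCost S R v ε (t • η) = ‖S η‖ ^ 2 / 2 * t ^ 2 + (ε * ‖η‖ + ⟪v, R η⟫) * t := by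
  simp only [controlCost, map_smul, norm_smul, Real.norm_of_nonneg ht, real_inner_smul_right]
  ring

theorem add_eq_zero_of_isMinOn_Ici {a b : ℝ}
    (h : IsMinOn (fun t : ℝ => a / 2 * t ^ 2 + b * t) (Set.Ici 0) 1) : a + b = 0 := by
  have hderiv : HasDerivAt (fun t : ℝ => a / 2 * t ^ 2 + b * t) (a + b) 1 := by
    refine (((hasDerivAt_pow 2 (1 : ℝ)).const_mul (a / 2)).add
      ((hasDerivAt_id' (1 : ℝ)).const_mul b)).congr_deriv ?_
    norm_num
  exact (h.isLocalMin (Ici_mem_nhds zero_lt_one)).hasDerivAt_eq_zero hderiv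

theorem sq_norm_add_mul_norm_add_inner_eq_zero_of_forall_controlCost_le
    {S : H →L[ℝ] K} {R : H →L[ℝ] K₀} {v : K₀} {ε : ℝ} {ηs : H}
    (hmin : ∀ η, controlCost S R v ε ηs ≤ controlCost S R v ε η) :
    ‖S ηs‖ ^ 2 + ε * ‖ηs‖ + ⟪v, R ηs⟫ = 0 := by
  have hray : IsMinOn (fun t : ℝ => ‖S ηs‖ ^ 2 / 2 * t ^ 2 + (ε * ‖ηs‖ + ⟪v, R ηs⟫) * t)
      (Set.Ici 0) 1 := by
    refine isMinOn_iff.mpr fun t (ht : 0 ≤ t) => ?_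
    have hone := controlCost_smul S R v ε ηs zero_le_one
    rw [one_smul] at hone
    simpa only [controlCost_smul S R v ε ηs ht, hone] using hmin (t • ηs)
  linarith [add_eq_zero_of_isMinOn_Ici hray]

end ControlCost

theorem le_mul_of_sq_le_mul_sq {a b w C : ℝ} (hC : 0 ≤ C) (hw : 0 ≤ w) (hb : 0 ≤ b)
    (hobs : b ^ 2 ≤ C * a ^ 2) (hbal : a ^ 2 ≤ w * b) : b ≤ C * w := by
  rcases hb.eq_or_lt with rfl | hb
  · positivity
  · refine le_of_mul_le_mul_right ?_ hb
    nlinarith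

theorem stmt7_general {H K K₀ : Type*}
    [NormedAddCommGroup H] [InnerProductSpace ℝ H]
    [NormedAddCommGroup K] [InnerProductSpace ℝ K]
    [NormedAddCommGroup K₀] [InnerProductSpace ℝ K₀]
    (S : H →L[ℝ] K) (R : H →L[ℝ] K₀) (v : K₀) (ε : ℝ) (hε : 0 < ε)
    (C : ℝ) (hC : 0 < C) (hobs : ∀ η : H, ‖R η‖ ^ 2 ≤ C * ‖S η‖ ^ 2)
    (J : H → ℝ)
    (hJ : ∀ η : H, J η = (1 / 2) * ‖S η‖ ^ 2 + ε * ‖η‖ + ⟪v, R η⟫)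
    (ηs : H) (hmin : ∀ η : H, J ηs ≤ J η) :
    ‖R ηs‖ ≤ C * ‖v‖ ∧ ε * ‖ηs‖ ≤ C * ‖v‖ ^ 2 ∧ ‖S ηs‖ ^ 2 ≤ C * ‖v‖ ^ 2 := by
  obtain rfl : J = controlCost S R v ε := funext hJ
  have heuler := sq_norm_add_mul_norm_add_inner_eq_zero_of_forall_controlCost_le hmin
  have hcs : -⟪v, R ηs⟫ ≤ ‖v‖ * ‖R ηs‖ := (neg_le_abs _).trans (abs_real_inner_le_norm _ _)
  have hpen : 0 ≤ ε * ‖ηs‖ := by positivity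
  have hbal : ‖S ηs‖ ^ 2 + ε * ‖ηs‖ ≤ ‖v‖ * ‖R ηs‖ := by linarith
  have hR : ‖R ηs‖ ≤ C * ‖v‖ :=
    le_mul_of_sq_le_mul_sq hC.le (norm_nonneg v) (norm_nonneg _) (hobs ηs) (by linarith)
  have hvR : ‖v‖ * ‖R ηs‖ ≤ C * ‖v‖ ^ 2 := by nlinarith [norm_nonneg v]
  exact ⟨hR, by linarith [sq_nonneg ‖S ηs‖], by linarith⟩

/-- Assume the observability inequality `‖R η‖² ≤ C ‖S η‖²` with `C > 0`.
If `ηs` minimizes `J(η) = (1/2)‖S η‖² + ε‖η‖ + ⟨v, R η⟩`, then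
`‖R ηs‖ ≤ C‖v‖`, `ε‖ηs‖ ≤ C‖v‖²`, and `‖S ηs‖² ≤ C‖v‖²`. -/
theorem stmt7 {H K K₀ : Type*}
    [NormedAddCommGroup H] [InnerProductSpace ℝ H] [CompleteSpace H]
    [NormedAddCommGroup K] [InnerProductSpace ℝ K] [CompleteSpace K]
    [NormedAddCommGroup K₀] [InnerProductSpace ℝ K₀] [CompleteSpace K₀]
    (S : H →L[ℝ] K) (R : H →L[ℝ] K₀) (v : K₀) (ε : ℝ) (hε : 0 < ε)
    (C : ℝ) (hC : 0 < C) (hobs : ∀ η : H, ‖R η‖ ^ 2 ≤ C * ‖S η‖ ^ 2)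
    (J : H → ℝ)
    (hJ : ∀ η : H, J η = (1 / 2) * ‖S η‖ ^ 2 + ε * ‖η‖ + ⟪v, R η⟫)
    (ηs : H) (hmin : ∀ η : H, J ηs ≤ J η) :
    ‖R ηs‖ ≤ C * ‖v‖ ∧ ε * ‖ηs‖ ≤ C * ‖v‖ ^ 2 ∧ ‖S ηs‖ ^ 2 ≤ C * ‖v‖ ^ 2 :=
  stmt7_general S R v ε hε C hC hobs J hJ ηs hmin
end

section
/- If θ* ∈ Θ maximizes θ ↦ ∫_D θ H dx over Θ, then θ*(x) = 1 for a.e. x ∈ {H > c(α)} and θ*(x) = 0 for a.e. x ∈ {H < c(α)}; equivalently, the sets A = {H > c(α)} ∩ {θ* < 1} and B = {H < c(α)} ∩ {θ* > 0} are Lebesgue-null. -/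
/-!
Bathtub principle. Put `m = α |D|`. The choice of `c = c(α)` gives
`|{H > c}| ≤ m ≤ |{H ≥ c}|`, so a convex combination of the indicators of `{H > c}` and
`{H ≥ c}` is an admissible `θ̃` equal to `1` on `{H > c}` and to `0` on `{H < c}`.
Then `(θ̃ - θ*) (H - c) ≥ 0` a.e., while its integral is `∫ θ̃ H - ∫ θ* H ≤ 0` because
`θ̃` and `θ*` have the same mass. Hence it vanishes a.e., which forces `θ* = 1` a.e. on
`{H > c}` and `θ* = 0` a.e. on `{H < c}`.
-/

open MeasureTheory Set Filter

section

variable {X : Type*} {f : X → ℝ} {c m : ℝ}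

lemma setOf_lt_eq_iUnion_setOf_add_one_div_le :
    {x | c < f x} = ⋃ n : ℕ, {x | c + 1 / (n + 1) ≤ f x} := by
  ext x
  simp only [mem_ofPred_eq, mem_iUnion]
  constructor
  · intro h
    obtain ⟨n, hn⟩ := exists_nat_one_div_lt (sub_pos.2 h)
    exact ⟨n, by linarith⟩
  · rintro ⟨n, hn⟩
    linarith [Nat.one_div_pos_of_nat (α := ℝ) (n := n)]

lemma setOf_le_eq_iInter_setOf_sub_one_div_le :
    {x | c ≤ f x} = ⋂ n : ℕ, {x | c - 1 / (n + 1) ≤ f x} := by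
  ext x
  simp only [mem_ofPred_eq, mem_iInter]
  constructor
  · intro h n
    linarith [Nat.one_div_pos_of_nat (α := ℝ) (n := n)]
  · intro h
    by_contra! hlt
    obtain ⟨n, hn⟩ := exists_nat_one_div_lt (sub_pos.2 hlt)
    linarith [h n]

variable [MeasurableSpace X] {μ : Measure X}

lemma measureReal_lt_le_of_forall_lt [IsFiniteMeasure μ]
    (h : ∀ b, c < b → μ.real {x | b ≤ f x} ≤ m) : μ.real {x | c < f x} ≤ m := by
  have hmono : Monotone fun n : ℕ ↦ {x | c + 1 / (n + 1) ≤ f x} :=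
    fun _ _ hnk _ hx ↦ (add_le_add_right (Nat.one_div_le_one_div hnk) c).trans hx
  rw [setOf_lt_eq_iUnion_setOf_add_one_div_le]
  refine le_of_tendsto' ((ENNReal.tendsto_toReal (measure_ne_top μ _)).comp
    (tendsto_measure_iUnion_atTop hmono)) fun n ↦ h _ ?_
  linarith [Nat.one_div_pos_of_nat (α := ℝ) (n := n)]

lemma le_measureReal_le_of_forall_lt [IsFiniteMeasure μ] (hf : AEMeasurable f μ)
    (h : ∀ b < c, m ≤ μ.real {x | b ≤ f x}) : m ≤ μ.real {x | c ≤ f x} := by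
  have hanti : Antitone fun n : ℕ ↦ {x | c - 1 / (n + 1) ≤ f x} :=
    fun _ _ hnk _ hx ↦ (sub_le_sub_left (Nat.one_div_le_one_div hnk) c).trans hx
  rw [setOf_le_eq_iInter_setOf_sub_one_div_le]
  refine ge_of_tendsto' ((ENNReal.tendsto_toReal (measure_ne_top μ _)).comp
    (tendsto_measure_iInter_atTop (fun _ ↦ nullMeasurableSet_le aemeasurable_const hf) hanti
      ⟨0, measure_ne_top μ _⟩)) fun n ↦ h _ ?_
  linarith [Nat.one_div_pos_of_nat (α := ℝ) (n := n)]

/-- The level `c(α)` of the paper, for `m = α |D|`. -/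
noncomputable def criticalLevel (μ : Measure X) (H : X → ℝ) (m : ℝ) : ℝ :=
  sSup {c | 0 ≤ c ∧ m ≤ μ.real {x | c ≤ H x}}

lemma bddAbove_criticalLevel_set {H : X → ℝ} (hH : Integrable H μ) (hH0 : 0 ≤ᵐ[μ] H)
    (hm : 0 < m) : BddAbove {c | 0 ≤ c ∧ m ≤ μ.real {x | c ≤ H x}} := by
  refine ⟨(∫ x, H x ∂μ) / m, fun c ⟨hc0, hc⟩ ↦ (le_div_iff₀ hm).2 ?_⟩
  calc c * m ≤ c * μ.real {x | c ≤ H x} := mul_le_mul_of_nonneg_left hc hc0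
    _ ≤ ∫ x, H x ∂μ := mul_meas_ge_le_integral_of_nonneg hH0 hH c

lemma measureReal_lt_le_and_le_measureReal_le_criticalLevel [IsFiniteMeasure μ]
    {H : X → ℝ} (hH : Integrable H μ) (hH0 : 0 ≤ᵐ[μ] H) (hm : 0 < m)
    (hmμ : m ≤ μ.real univ) :
    μ.real {x | criticalLevel μ H m < H x} ≤ m ∧
      m ≤ μ.real {x | criticalLevel μ H m ≤ H x} := by
  set S := {c | 0 ≤ c ∧ m ≤ μ.real {x | c ≤ H x}}
  have hbdd : BddAbove S := bddAbove_criticalLevel_set hH hH0 hm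
  have hH0' : {x | 0 ≤ H x} =ᵐ[μ] univ := ae_eq_univ.2 hH0
  have h0 : (0 : ℝ) ∈ S := ⟨le_rfl, by rwa [measureReal_congr hH0']⟩
  have hc0 : 0 ≤ criticalLevel μ H m := le_csSup hbdd h0
  constructor
  · refine measureReal_lt_le_of_forall_lt fun b hb ↦ le_of_not_ge fun hbm ↦ ?_
    exact (le_csSup hbdd ⟨hc0.trans hb.le, hbm⟩).not_gt hb
  · refine le_measureReal_le_of_forall_lt hH.aemeasurable fun b hb ↦ ?_
    obtain ⟨s, ⟨-, hs⟩, hbs⟩ := exists_lt_of_lt_csSup ⟨0, h0⟩ hb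
    exact hs.trans (measureReal_mono fun x hx ↦ hbs.le.trans hx)

lemma exists_bathtub_function [IsFiniteMeasure μ] {H : X → ℝ} (hH : AEMeasurable H μ)
    (hlt : μ.real {x | c < H x} ≤ m) (hle : m ≤ μ.real {x | c ≤ H x}) :
    ∃ θ : X → ℝ, AEStronglyMeasurable θ μ ∧ (∀ x, θ x ∈ Icc 0 1) ∧ ∫ x, θ x ∂μ = m ∧
      (∀ x, c < H x → θ x = 1) ∧ (∀ x, H x < c → θ x = 0) := by
  set A := {x | c < H x}
  set B := {x | c ≤ H x}
  have hA : NullMeasurableSet A μ := nullMeasurableSet_lt aemeasurable_const hH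
  have hB : NullMeasurableSet B μ := nullMeasurableSet_le aemeasurable_const hH
  obtain ⟨s, t, hs, ht, hst, hm⟩ : m ∈ segment ℝ (μ.real A) (μ.real B) := by
    rw [segment_eq_Icc (hlt.trans hle)]
    exact ⟨hlt, hle⟩
  refine ⟨fun x ↦ s * A.indicator (fun _ ↦ 1) x + t * B.indicator (fun _ ↦ 1) x, ?_,
    fun x ↦ ?_, ?_, fun x hx ↦ ?_, fun x hx ↦ ?_⟩
  · exact ((aemeasurable_const.indicator₀ hA).const_mul s |>.add
      ((aemeasurable_const.indicator₀ hB).const_mul t)).aestronglyMeasurable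
  · constructor <;> by_cases hxA : x ∈ A <;> by_cases hxB : x ∈ B <;> simp [hxA, hxB] <;>
      linarith
  · dsimp only
    rw [integral_add (((integrable_const 1).indicator₀ hA).const_mul s)
      (((integrable_const 1).indicator₀ hB).const_mul t), integral_const_mul, integral_const_mul,
      integral_indicator₀ hA, integral_indicator₀ hB]
    simpa using hm
  · simp [A, B, hx, hx.le, hst]
  · simp [A, B, hx.not_ge, hx.not_gt]

lemma sub_mul_sub_ae_eq_zero_of_integral_mul_le [IsFiniteMeasure μ] {H θ θ' : X → ℝ}
    (hH : Integrable H μ) (hθ : AEStronglyMeasurable θ μ) (hθ01 : ∀ᵐ x ∂μ, θ x ∈ Icc 0 1)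
    (hθ' : AEStronglyMeasurable θ' μ) (hθ'01 : ∀ᵐ x ∂μ, θ' x ∈ Icc 0 1)
    (hθ'1 : ∀ᵐ x ∂μ, c < H x → θ' x = 1) (hθ'0 : ∀ᵐ x ∂μ, H x < c → θ' x = 0)
    (hint : ∫ x, θ' x ∂μ = ∫ x, θ x ∂μ) (hle : ∫ x, θ' x * H x ∂μ ≤ ∫ x, θ x * H x ∂μ) :
    (fun x ↦ (θ' x - θ x) * (H x - c)) =ᵐ[μ] 0 := by
  have hnorm {φ : X → ℝ} (h : ∀ᵐ x ∂μ, φ x ∈ Icc 0 1) : ∀ᵐ x ∂μ, ‖φ x‖ ≤ 1 :=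
    h.mono fun _ hx ↦ (Real.norm_of_nonneg hx.1).trans_le hx.2
  have hθi := Integrable.of_mem_Icc 0 1 hθ.aemeasurable hθ01
  have hθ'i := Integrable.of_mem_Icc 0 1 hθ'.aemeasurable hθ'01
  have hθHi : Integrable (fun x ↦ θ x * H x) μ := hH.bdd_mul hθ (hnorm hθ01)
  have hθ'Hi : Integrable (fun x ↦ θ' x * H x) μ := hH.bdd_mul hθ' (hnorm hθ'01)
  set g := fun x ↦ (θ' x - θ x) * (H x - c)
  have hgi : Integrable g μ := ((hθ'Hi.sub hθHi).sub ((hθ'i.const_mul c).sub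
    (hθi.const_mul c))).congr (ae_of_all _ fun x ↦ by simp only [g, Pi.sub_apply]; ring)
  have hg_nonneg : 0 ≤ᵐ[μ] g := by
    filter_upwards [hθ01, hθ'1, hθ'0] with x hx h1 h0
    rcases lt_trichotomy (H x) c with h | h | h
    · simp only [g, h0 h, Pi.zero_apply]
      nlinarith [hx.1]
    · simp [g, h]
    · simp only [g, h1 h, Pi.zero_apply]
      nlinarith [hx.2]
  have hg_int : ∫ x, g x ∂μ = (∫ x, θ' x * H x ∂μ - ∫ x, θ x * H x ∂μ) -
      (c * ∫ x, θ' x ∂μ - c * ∫ x, θ x ∂μ) := by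
    rw [← integral_sub hθ'Hi hθHi, ← integral_const_mul, ← integral_const_mul,
      ← integral_sub (hθ'i.const_mul c) (hθi.const_mul c),
      ← integral_sub (f := fun x ↦ θ' x * H x - θ x * H x) (g := fun x ↦ c * θ' x - c * θ x)
        (hθ'Hi.sub hθHi) ((hθ'i.const_mul c).sub (hθi.const_mul c))]
    congr with x
    simp only [g]
    ring
  have hg_int_nonpos : ∫ x, g x ∂μ ≤ 0 := by
    rw [hg_int, hint]
    linarith
  exact (integral_eq_zero_iff_of_nonneg_ae hg_nonneg hgi).1
    (hg_int_nonpos.antisymm (integral_nonneg_of_ae hg_nonneg))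

lemma measure_eq_zero_of_integral_mul_le [IsFiniteMeasure μ] {H θ θ' : X → ℝ}
    (hH : Integrable H μ) (hθ : AEStronglyMeasurable θ μ) (hθ01 : ∀ᵐ x ∂μ, θ x ∈ Icc 0 1)
    (hθ' : AEStronglyMeasurable θ' μ) (hθ'01 : ∀ᵐ x ∂μ, θ' x ∈ Icc 0 1)
    (hθ'1 : ∀ᵐ x ∂μ, c < H x → θ' x = 1) (hθ'0 : ∀ᵐ x ∂μ, H x < c → θ' x = 0)
    (hint : ∫ x, θ' x ∂μ = ∫ x, θ x ∂μ) (hle : ∫ x, θ' x * H x ∂μ ≤ ∫ x, θ x * H x ∂μ) :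
    μ {x | c < H x ∧ θ x < 1} = 0 ∧ μ {x | H x < c ∧ 0 < θ x} = 0 := by
  have hzero :=
    sub_mul_sub_ae_eq_zero_of_integral_mul_le hH hθ hθ01 hθ' hθ'01 hθ'1 hθ'0 hint hle
  constructor <;> refine measure_eq_zero_iff_ae_notMem.2 ?_
  · filter_upwards [hzero, hθ'1] with x hx h1
    rintro ⟨hc, hθx⟩
    simp only [h1 hc, Pi.zero_apply] at hx
    nlinarith
  · filter_upwards [hzero, hθ'0] with x hx h0
    rintro ⟨hc, hθx⟩
    simp only [h0 hc, Pi.zero_apply] at hx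
    nlinarith

end

/-- If `θs ∈ Θ` maximizes `θ ↦ ∫_D θ H` over `Θ`, then `θs = 1` a.e. on
`{H > c(α)}` and `θs = 0` a.e. on `{H < c(α)}`; equivalently the sets
`A = {H > c(α)} ∩ {θs < 1}` and `B = {H < c(α)} ∩ {θs > 0}` are null. -/
theorem stmt13 {d : ℕ} (D : Set (EuclideanSpace ℝ (Fin d)))
    (hD : MeasurableSet D) (hD0 : 0 < volume D) (hDfin : volume D < ⊤)
    (α : ℝ) (hα : α ∈ Set.Ioo (0 : ℝ) 1)
    (Θ : Set (EuclideanSpace ℝ (Fin d) → ℝ))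
    (hΘ : Θ = {θ | AEStronglyMeasurable θ (volume.restrict D) ∧
      (∀ᵐ x ∂(volume.restrict D), θ x ∈ Set.Icc (0 : ℝ) 1) ∧
      ∫ x in D, θ x = α * (volume D).toReal})
    (H : EuclideanSpace ℝ (Fin d) → ℝ)
    (hH : IntegrableOn H D) (hHpos : ∀ x ∈ D, 0 ≤ H x)
    (c : ℝ)
    (hc : c = sSup {c' : ℝ | 0 ≤ c' ∧
      α * (volume D).toReal ≤ (volume {x ∈ D | c' ≤ H x}).toReal})
    (θs : EuclideanSpace ℝ (Fin d) → ℝ) (hθs : θs ∈ Θ)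
    (hmax : ∀ θ ∈ Θ, ∫ x in D, θ x * H x ≤ ∫ x in D, θs x * H x) :
    volume {x ∈ D | c < H x ∧ θs x < 1} = 0 ∧
      volume {x ∈ D | H x < c ∧ 0 < θs x} = 0 := by
  set ν := volume.restrict D
  have : IsFiniteMeasure ν := isFiniteMeasure_restrict.2 hDfin.ne
  have hsep (P : EuclideanSpace ℝ (Fin d) → Prop) : volume {x ∈ D | P x} = ν {x | P x} := by
    rw [Measure.restrict_apply' hD, Set.inter_comm]
    rfl
  have hm : 0 < α * (volume D).toReal := mul_pos hα.1 (ENNReal.toReal_pos hD0.ne' hDfin.ne)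
  have hmν : α * (volume D).toReal ≤ ν.real univ := by
    rw [measureReal_restrict_apply_univ]
    exact mul_le_of_le_one_left ENNReal.toReal_nonneg hα.2.le
  have hcrit : c = criticalLevel ν H (α * (volume D).toReal) := by
    simp only [hc, criticalLevel, measureReal_def, hsep]
  rw [hΘ] at hθs hmax
  obtain ⟨hθsm, hθs01, hθsint⟩ := hθs
  obtain ⟨hlt, hle⟩ := measureReal_lt_le_and_le_measureReal_le_criticalLevel hH
    ((ae_restrict_mem hD).mono hHpos) hm hmν
  rw [← hcrit] at hlt hle
  obtain ⟨θ, hθm, hθ01, hθint, hθ1, hθ0⟩ := exists_bathtub_function hH.aemeasurable hlt hle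
  rw [hsep, hsep]
  exact measure_eq_zero_of_integral_mul_le hH hθsm hθs01 hθm (ae_of_all _ hθ01)
    (ae_of_all _ hθ1) (ae_of_all _ hθ0) (hθint.trans hθsint.symm)
    (hmax θ ⟨hθm, ae_of_all _ hθ01, hθint⟩)
end
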